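/- arXiv:1805.08557 — 5 statements merged into one kernel-verified Lean document; each statement's English description precedes it below -/
import Mathlib

section
/- Let \psi: (0,r) \to (0,\infty) be in L^1(0,r), strictly positive a.e., and let \Psi(\rho) = \int_0^\rho \psi(\lambda) d\lambda. Suppose a self-adjoint non-negative operator H on \mathcal{H} satisfies: for all u, v in a dense set, the spectral measure of (0,\rho) satisfies |((E(\rho)-E(\{0\}))u, v)| \le \Psi(\rho) \|u\|_\mathcal{X} \|v\|_\mathcal{Y} for all \rho \in (0,r). Then there exists K_0 \in (0,1) such that for all K \in (0, K_0) and all u in the form domain with finite \|u\|_\mathcal{X}, \|u\|_\mathcal{Y}: (1-K) \Psi^{-1}(K \cdot Var(u)/(\|u\|_\mathcal{X}\|u\|_\mathcal{Y})) \cdot Var(u) \le \mathcal{E}(u). -/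
open MeasureTheory Set

/-- Theorem 3a of the paper, implicit weak Poincaré inequality.
The spectral data of the self-adjoint non-negative operator `H` is encoded, for each
`u` in the form domain `D`, by the scalar spectral measure `μ u = (E(·)u, u)` on `ℝ`,
supported on `[0,∞)`, with `Var u = μ u (0,∞)`, `ℰ u = ∫ λ dμ_u`, and
`((E(ρ) - E({0}))u, v)` bounded via `μ u (0,ρ) ≤ Ψ(ρ)‖u‖_X ‖u‖_Y` for `ρ ∈ (0,r)`,
where `Ψ(ρ) = ∫_0^ρ ψ`.  `Ψinv` is the generalized inverse of `Ψ` on `(0,r)`.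
Conclusion: there is `K₀ ∈ (0,1)` such that for all `K ∈ (0,K₀)` and all `u ∈ D`,
`(1-K) Ψ⁻¹(K·Var(u)/(‖u‖_X‖u‖_Y))·Var(u) ≤ ℰ(u)`. -/
theorem stmt1 {H : Type*} [NormedAddCommGroup H] [InnerProductSpace ℝ H]
    (D : Set H) (μ : H → Measure ℝ) (Var ℰ Xn Yn : H → ℝ)
    (r : ℝ) (hr : 0 < r) (ψ Ψ Ψinv : ℝ → ℝ)
    (hψint : IntegrableOn ψ (Ioo 0 r))
    (hψpos : ∀ᵐ lam ∂(volume.restrict (Ioo 0 r)), 0 < ψ lam)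
    (hΨ : ∀ ρ ∈ Ioo (0 : ℝ) r, Ψ ρ = ∫ lam in Ioo 0 ρ, ψ lam)
    (hΨinv : ∀ y : ℝ, Ψinv y = sSup {x | x ∈ Ioo (0 : ℝ) r ∧ Ψ x ≤ y})
    (hfin : ∀ u ∈ D, IsFiniteMeasure (μ u))
    (hsupp : ∀ u ∈ D, (μ u) (Iio (0 : ℝ)) = 0)
    (hVar : ∀ u ∈ D, Var u = ((μ u) (Ioi (0 : ℝ))).toReal)
    (hint : ∀ u ∈ D, Integrable (fun lam : ℝ => lam) (μ u))
    (hℰ : ∀ u ∈ D, ℰ u = ∫ lam, lam ∂(μ u))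
    (hXnonneg : ∀ u ∈ D, 0 ≤ Xn u) (hYnonneg : ∀ u ∈ D, 0 ≤ Yn u)
    (hDoS : ∀ u ∈ D, ∀ ρ ∈ Ioo (0 : ℝ) r,
      ((μ u) (Ioo 0 ρ)).toReal ≤ Ψ ρ * (Xn u * Yn u)) :
    ∃ K₀ ∈ Ioo (0 : ℝ) 1, ∀ K ∈ Ioo (0 : ℝ) K₀, ∀ u ∈ D,
      (1 - K) * Ψinv (K * Var u / (Xn u * Yn u)) * Var u ≤ ℰ u := by
  refine ⟨1/2, by norm_num, ?_⟩
  intro K hK u hu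
  haveI := hfin u hu
  have hK0 : 0 < K := hK.1
  have hK1 : K < 1 := lt_trans hK.2 (by norm_num)
  have hae : ∀ᵐ lam ∂(μ u), 0 ≤ lam := by
    rw [ae_iff]
    have hset : {lam : ℝ | ¬ 0 ≤ lam} = Iio 0 := by ext x; simp [not_le]
    rw [hset]; exact hsupp u hu
  have hEnn : 0 ≤ ℰ u := by
    rw [hℰ u hu]; exact integral_nonneg_of_ae hae
  have hVnn : 0 ≤ Var u := by rw [hVar u hu]; positivity
  have hΨinvnn : ∀ y, 0 ≤ Ψinv y := fun y => by
    rw [hΨinv]; exact Real.sSup_nonneg (fun x hx => le_of_lt hx.1.1)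
  rcases eq_or_lt_of_le hVnn with hV0 | hVpos
  · rw [← hV0, mul_zero]; exact hEnn
  have hXYnn : 0 ≤ Xn u * Yn u := mul_nonneg (hXnonneg u hu) (hYnonneg u hu)
  have hc : 0 < (1 - K) * Var u := mul_pos (by linarith) hVpos
  have key : ∀ ρ ∈ {x | x ∈ Ioo (0 : ℝ) r ∧ Ψ x ≤ K * Var u / (Xn u * Yn u)},
      ρ * ((1 - K) * Var u) ≤ ℰ u := by
    intro ρ hρ
    obtain ⟨⟨hρ0, hρr⟩, hΨρ⟩ := hρ
    have hsmall : ((μ u) (Ioo 0 ρ)).toReal ≤ K * Var u := by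
      have h1 := hDoS u hu ρ ⟨hρ0, hρr⟩
      rcases eq_or_lt_of_le hXYnn with h0 | hpos
      · rw [← h0, mul_zero] at h1
        have : 0 < K * Var u := mul_pos hK0 hVpos
        linarith
      · have h2 : Ψ ρ * (Xn u * Yn u) ≤ K * Var u := (le_div_iff₀ hpos).mp hΨρ
        linarith
    have hfin1 : (μ u) (Ioo 0 ρ) ≠ ⊤ := measure_ne_top _ _
    have hfin2 : (μ u) (Ici ρ) ≠ ⊤ := measure_ne_top _ _
    have hdisj : Disjoint (Ioo (0 : ℝ) ρ) (Ici ρ) :=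
      Set.disjoint_left.mpr fun x hx₁ hx₂ => absurd hx₂ (not_le.mpr hx₁.2)
    have hm : (μ u) (Ioi (0 : ℝ)) = (μ u) (Ioo 0 ρ) + (μ u) (Ici ρ) := by
      rw [← Ioo_union_Ici_eq_Ioi hρ0, measure_union hdisj measurableSet_Ici]
    have hVsplit : Var u = ((μ u) (Ioo 0 ρ)).toReal + ((μ u) (Ici ρ)).toReal := by
      rw [hVar u hu, hm, ENNReal.toReal_add hfin1 hfin2]
    have htail : Var u - K * Var u ≤ ((μ u) (Ici ρ)).toReal := by linarith
    have hint' := hint u hu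
    have h3 : ρ * ((μ u) (Ici ρ)).toReal ≤ ∫ lam in Ici ρ, lam ∂(μ u) :=
      setIntegral_ge_of_const_le_real measurableSet_Ici (measure_ne_top _ _)
        (fun x hx => hx) hint'.integrableOn
    have h4 : ∫ lam in Ici ρ, lam ∂(μ u) ≤ ℰ u := by
      rw [hℰ u hu]; exact setIntegral_le_integral hint' hae
    calc ρ * ((1 - K) * Var u) = ρ * (Var u - K * Var u) := by ring
      _ ≤ ρ * ((μ u) (Ici ρ)).toReal := mul_le_mul_of_nonneg_left htail hρ0.le
      _ ≤ ∫ lam in Ici ρ, lam ∂(μ u) := h3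
      _ ≤ ℰ u := h4
  have hsup : Ψinv (K * Var u / (Xn u * Yn u)) ≤ ℰ u / ((1 - K) * Var u) := by
    rw [hΨinv]
    refine Real.sSup_le (fun x hx => ?_) (by positivity)
    rw [le_div_iff₀ hc]
    exact key x hx
  calc (1 - K) * Ψinv (K * Var u / (Xn u * Yn u)) * Var u
      = Ψinv (K * Var u / (Xn u * Yn u)) * ((1 - K) * Var u) := by ring
    _ ≤ (ℰ u / ((1 - K) * Var u)) * ((1 - K) * Var u) :=
        mul_le_mul_of_nonneg_right hsup hc.le
    _ = ℰ u := div_mul_cancel₀ _ hc.ne'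
end

section
/- Let a, A, B, C > 0, b > 0, c > 0 with bc < 1, and let y: [0,\infty) \to (0,\infty) satisfy y(t) \le (y(0)^{-a} + a A \int_0^t (B + C s^b)^{-c} ds)^{-1/a}. Then y(t) = O(t^{-(1-bc)/a}) as t \to +\infty. -/
open MeasureTheory Set

/-- If `y(t) ≤ (y(0)^{-a} + aA ∫_0^t (B + C s^b)^{-c} ds)^{-1/a}`
with `a, A, B, C > 0`, `b, c > 0` and `bc < 1`, then `y(t) = O(t^{-(1-bc)/a})`
as `t → ∞`. -/
theorem stmt4 (a A B C b c : ℝ) (ha : 0 < a) (hA : 0 < A) (hB : 0 < B)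
    (hC : 0 < C) (hb : 0 < b) (hc : 0 < c) (hbc : b * c < 1)
    (y : ℝ → ℝ) (hy : ∀ t : ℝ, 0 ≤ t → 0 < y t)
    (hbound : ∀ t : ℝ, 0 ≤ t →
      y t ≤ (y 0 ^ (-a) + a * A * ∫ s in Ioc (0 : ℝ) t, (B + C * s ^ b) ^ (-c)) ^ (-(1 / a))) :
    ∃ T > (0 : ℝ), ∃ K > (0 : ℝ), ∀ t ≥ T, y t ≤ K * t ^ (-((1 - b * c) / a)) := by
  set f : ℝ → ℝ := fun s => (B + C * s ^ b) ^ (-c) with hf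
  have hinner : ∀ s : ℝ, 0 ≤ s → 0 < B + C * s ^ b := by
    intro s hs
    have : 0 ≤ C * s ^ b := mul_nonneg hC.le (Real.rpow_nonneg hs b)
    linarith
  have hfpos : ∀ s : ℝ, 0 ≤ s → 0 < f s := fun s hs =>
    Real.rpow_pos_of_pos (hinner s hs) _
  -- T
  set D : ℝ := a * A * ((2 * C) ^ (-c) / 2) with hD
  have hDpos : 0 < D := by
    have : 0 < (2 * C) ^ (-c) := Real.rpow_pos_of_pos (by linarith) _
    positivity
  set K : ℝ := D ^ (-(1 / a)) with hK
  have hKpos : 0 < K := Real.rpow_pos_of_pos hDpos _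
  refine ⟨max 1 ((B / C) ^ (1 / b)), lt_of_lt_of_le one_pos (le_max_left _ _), K, hKpos, ?_⟩
  intro t ht
  have ht1 : (1 : ℝ) ≤ t := le_trans (le_max_left _ _) ht
  have htpos : 0 < t := lt_of_lt_of_le one_pos ht1
  have htB : B ≤ C * t ^ b := by
    have h1 : (B / C) ^ (1 / b) ≤ t := le_trans (le_max_right _ _) ht
    have h2 : ((B / C) ^ (1 / b)) ^ b ≤ t ^ b :=
      Real.rpow_le_rpow (Real.rpow_nonneg (by positivity) _) h1 hb.le
    rw [← Real.rpow_mul (by positivity), one_div, inv_mul_cancel₀ hb.ne',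
      Real.rpow_one] at h2
    calc B = C * (B / C) := by field_simp
    _ ≤ C * t ^ b := by
        apply mul_le_mul_of_nonneg_left _ hC.le
        simpa using h2
  -- continuity / integrability of f on [0, t]
  have hfcont : ContinuousOn f (Icc 0 t) := by
    intro s hs
    have h1 : ContinuousAt (fun s : ℝ => B + C * s ^ b) s := by
      exact (continuousAt_const.add (continuousAt_const.mul
        (Real.continuousAt_rpow_const s b (Or.inr hb.le))))
    exact (h1.rpow_const (Or.inl (hinner s hs.1).ne')).continuousWithinAt
  have hint : IntegrableOn f (Ioc 0 t) :=
    (hfcont.integrableOn_Icc).mono_set Ioc_subset_Icc_self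
  -- lower bound for the integral
  have hlow : (t / 2) * (B + C * t ^ b) ^ (-c) ≤ ∫ s in Ioc (0:ℝ) t, f s := by
    have hsub : Ioc (t/2) t ⊆ Ioc (0:ℝ) t :=
      Ioc_subset_Ioc (by linarith) le_rfl
    have hstep : ∀ s ∈ Ioc (t/2) t, (B + C * t ^ b) ^ (-c) ≤ f s := by
      intro s hs
      have hs0 : (0:ℝ) < s := lt_of_le_of_lt (by linarith) hs.1
      have : B + C * s ^ b ≤ B + C * t ^ b := by
        have := Real.rpow_le_rpow hs0.le hs.2 hb.le
        nlinarith
      exact Real.rpow_le_rpow_of_nonpos (hinner s hs0.le) this (by linarith)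
    have h1 : (B + C * t ^ b) ^ (-c) * (volume (Ioc (t/2) t)).toReal
        ≤ ∫ s in Ioc (t/2) t, f s :=
      setIntegral_ge_of_const_le_real measurableSet_Ioc (by simp)
        hstep (hint.mono_set hsub)
    have hvol : (volume (Ioc (t/2) t)).toReal = t / 2 := by
      rw [Real.volume_Ioc, ENNReal.toReal_ofReal (by linarith)]
      ring
    have h2 : ∫ s in Ioc (t/2) t, f s ≤ ∫ s in Ioc (0:ℝ) t, f s := by
      apply setIntegral_mono_set hint
      · filter_upwards [ae_restrict_mem measurableSet_Ioc] with s hs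
        exact (hfpos s hs.1.le).le
      · exact Filter.Eventually.of_forall hsub
    rw [hvol, mul_comm] at h1
    linarith
  -- bound (B + C t^b)^(-c) ≥ (2C)^(-c) t^(-(b*c))
  have hb2 : (2 * C) ^ (-c) * t ^ (-(b*c)) ≤ (B + C * t ^ b) ^ (-c) := by
    have h1 : B + C * t ^ b ≤ 2 * C * t ^ b := by nlinarith [Real.rpow_nonneg htpos.le b]
    have h2 : (2 * C * t ^ b) ^ (-c) ≤ (B + C * t ^ b) ^ (-c) :=
      Real.rpow_le_rpow_of_nonpos (hinner t htpos.le) h1 (by linarith)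
    calc (2 * C) ^ (-c) * t ^ (-(b*c)) = (2 * C * t ^ b) ^ (-c) := by
          rw [Real.mul_rpow (by positivity) (Real.rpow_nonneg htpos.le b),
            ← Real.rpow_mul htpos.le]
          congr 1
          ring
    _ ≤ _ := h2
  -- main estimate
  have hDle : D * t ^ (1 - b*c) ≤ y 0 ^ (-a) + a * A * ∫ s in Ioc (0:ℝ) t, f s := by
    have hy0 : 0 < y 0 ^ (-a) := Real.rpow_pos_of_pos (hy 0 le_rfl) _
    have hstep : D * t ^ (1 - b*c) ≤ a * A * ((t/2) * (B + C * t ^ b) ^ (-c)) := by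
      have h3 : (2 * C) ^ (-c) * t ^ (-(b*c)) * (t / 2) ≤ (B + C * t ^ b) ^ (-c) * (t/2) :=
        mul_le_mul_of_nonneg_right hb2 (by linarith)
      have h4 : t ^ (-(b*c)) * t = t ^ (1 - b*c) := by
        nth_rewrite 2 [show t = t ^ (1:ℝ) by rw [Real.rpow_one]]
        rw [← Real.rpow_add htpos]
        ring_nf
      calc D * t ^ (1 - b*c) = (2 * C) ^ (-c) * t ^ (-(b*c)) * (t/2) * (a * A) := by
            rw [← h4]; rw [hD]; ring
      _ ≤ (B + C * t ^ b) ^ (-c) * (t/2) * (a * A) := by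
            apply mul_le_mul_of_nonneg_right h3 (by positivity)
      _ = a * A * ((t/2) * (B + C * t ^ b) ^ (-c)) := by ring
    have := mul_le_mul_of_nonneg_left hlow (by positivity : (0:ℝ) ≤ a * A)
    linarith
  have hfin : y t ≤ K * t ^ (-((1 - b * c) / a)) := by
    have hb1 := hbound t htpos.le
    have hpos : 0 < D * t ^ (1 - b*c) :=
      mul_pos hDpos (Real.rpow_pos_of_pos htpos _)
    have h2 : (y 0 ^ (-a) + a * A * ∫ s in Ioc (0:ℝ) t, f s) ^ (-(1/a))
        ≤ (D * t ^ (1 - b*c)) ^ (-(1/a)) :=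
      Real.rpow_le_rpow_of_nonpos hpos hDle (neg_nonpos.mpr (by positivity))
    have h3 : (D * t ^ (1 - b*c)) ^ (-(1/a)) = K * t ^ (-((1 - b * c) / a)) := by
      rw [Real.mul_rpow hDpos.le (Real.rpow_nonneg htpos.le _), hK,
        ← Real.rpow_mul htpos.le]
      congr 1
      field_simp
    calc y t ≤ _ := hb1
    _ ≤ _ := le_of_le_of_eq h2 h3
  exact hfin
end

section
/- Let H be a self-adjoint non-negative operator on a Hilbert space generating the semigroup P_t = e^{-tH}, and suppose the (\Phi,p)-weak Poincaré inequality Var(u) \le C \mathcal{E}(u)^{1/p} \Phi(u)^{1/q} holds (1/p + 1/q = 1, p > 1) with \Phi(u) = \|u\|_\mathcal{X}^2 and p = (\alpha+2)/(\alpha+1) for some \alpha > -1. Suppose also \|P_t u\|_\mathcal{X}^2 \le \|u\|_\mathcal{X}^2 for all t \ge 0. Then Var(P_t u) \le (Var(u)^{-1/(1+\alpha)} + C_3 \|u\|_\mathcal{X}^{-2/(1+\alpha)} t)^{-(1+\alpha)} for all t \ge 0, where C_3 > 0 depends only on C and \alpha; in particular Var(P_t u) = O(t^{-(1+\alpha)})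 as t \to \infty. -/
open Set

/-- decay from the weak Poincaré inequality, Theorem 2 of the paper,
case `C₂ = 0`.  `P` is the Markov semigroup `e^{-tH}` on the Hilbert space `ℋ`,
`Var u = ‖u - E({0})u‖²`, `ℰ u = ‖H^{1/2}u‖²`, and `Xn` is the norm of a space `𝒳`
invariant under the semigroup; the `(Φ,p)`-weak Poincaré inequality with
`Φ(u) = ‖u‖_𝒳²`, `p = (α+2)/(α+1)` (so `1/q = 1/(α+2)`) holds, the semigroup does not
increase the `𝒳`-norm, and the entropy identity `d/dt Var(P_t u) = -2ℰ(P_t u)` holds.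
Then there is `C₃ > 0`, depending only on `C` and `α`, with
`Var(P_t u) ≤ (Var(u)^{-1/(1+α)} + C₃‖u‖_𝒳^{-2/(1+α)} t)^{-(1+α)}`; in particular
`Var(P_t u) = O(t^{-(1+α)})`. -/
theorem stmt13 {ℋ : Type*} [NormedAddCommGroup ℋ] [InnerProductSpace ℝ ℋ]
    (P : ℝ → ℋ → ℋ) (Var ℰ Xn : ℋ → ℝ) (α C : ℝ)
    (hα : -1 < α) (hC : 0 < C)
    (hVarnonneg : ∀ u, 0 ≤ Var u) (hℰnonneg : ∀ u, 0 ≤ ℰ u)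
    (hXnonneg : ∀ u, 0 ≤ Xn u)
    (hP0 : ∀ u, P 0 u = u)
    (hWPI : ∀ u, Var u ≤ C * ℰ u ^ ((α + 1) / (α + 2)) * (Xn u ^ 2) ^ (1 / (α + 2)))
    (hXdecay : ∀ u, ∀ t : ℝ, 0 ≤ t → Xn (P t u) ^ 2 ≤ Xn u ^ 2)
    (hderiv : ∀ u, ∀ t : ℝ, 0 ≤ t →
      HasDerivWithinAt (fun s : ℝ => Var (P s u)) (-2 * ℰ (P t u)) (Ici 0) t) :
    ∃ C₃ > (0 : ℝ), ∀ u,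
      (∀ t : ℝ, 0 ≤ t →
        Var (P t u) ≤
          (Var u ^ (-(1 : ℝ) / (1 + α)) + C₃ * Xn u ^ (-(2 : ℝ) / (1 + α)) * t)
            ^ (-(1 + α))) ∧
      ∃ T > (0 : ℝ), ∃ K > (0 : ℝ), ∀ t ≥ T, Var (P t u) ≤ K * t ^ (-(1 + α)) := by
  have ha1 : (0 : ℝ) < 1 + α := by linarith
  have ha2 : (0 : ℝ) < α + 2 := by linarith
  have ha1' : (0 : ℝ) < α + 1 := by linarith
  set r : ℝ := (α + 2) / (α + 1) with hr_def
  have hr_pos : 0 < r := div_pos ha2 ha1'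
  have hCr : (0 : ℝ) < C ^ r := Real.rpow_pos_of_pos hC r
  set C₃ : ℝ := ((1 + α) * C ^ r)⁻¹ with hC₃def
  have hC₃ : 0 < C₃ := by positivity
  refine ⟨C₃, hC₃, fun u => ?_⟩
  rcases eq_or_lt_of_le (hVarnonneg u) with hV0 | hV0
  · -- degenerate case `Var u = 0`: the function stays 0
    have hzero : ∀ t : ℝ, 0 ≤ t → Var (P t u) = 0 := by
      intro t ht
      refine le_antisymm ?_ (hVarnonneg _)
      have := image_le_of_deriv_right_le_deriv_boundary
        (f := fun s : ℝ => Var (P s u)) (f' := fun s : ℝ => -2 * ℰ (P s u))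
        (a := 0) (b := t) (B := fun _ => (0 : ℝ)) (B' := fun _ => (0 : ℝ))
        (fun s hs => ((hderiv u s hs.1).continuousWithinAt).mono Icc_subset_Ici_self)
        (fun x hx => (hderiv u x hx.1).mono (Ici_subset_Ici.2 hx.1))
        (by show Var (P 0 u) ≤ (0:ℝ); rw [hP0]; exact hV0.ge)
        continuousOn_const
        (fun x _ => hasDerivWithinAt_const x _ 0)
        (fun x _ => by show -2 * ℰ (P x u) ≤ (0:ℝ); nlinarith [hℰnonneg (P x u)])
      exact this ⟨ht, le_rfl⟩
    constructor
    · intro t ht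
      rw [hzero t ht]
      exact Real.rpow_nonneg
        (add_nonneg (Real.rpow_nonneg (hVarnonneg u) _)
          (mul_nonneg (mul_nonneg hC₃.le (Real.rpow_nonneg (hXnonneg u) _)) ht)) _
    · refine ⟨1, one_pos, 1, one_pos, fun t ht => ?_⟩
      rw [hzero t (by linarith), one_mul]
      exact Real.rpow_nonneg (by linarith) _
  · -- main case `Var u > 0`
    have hXpos : 0 < Xn u := by
      rcases eq_or_lt_of_le (hXnonneg u) with hX | hX
      · exfalso
        have := hWPI u
        rw [← hX] at this
        rw [show ((0:ℝ) ^ 2 : ℝ) = 0 by norm_num,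
          Real.zero_rpow (by positivity : (1 : ℝ) / (α + 2) ≠ 0)] at this
        nlinarith
      · exact hX
    set A : ℝ := Var u ^ (-(1 : ℝ) / (1 + α)) with hAdef
    set Bc : ℝ := C₃ * Xn u ^ (-(2 : ℝ) / (1 + α)) with hBcdef
    have hA : 0 < A := Real.rpow_pos_of_pos hV0 _
    have hBc : 0 < Bc := mul_pos hC₃ (Real.rpow_pos_of_pos hXpos _)
    set M : ℝ := Xn u ^ 2 with hMdef
    have hM : 0 < M := by positivity
    -- relate `Xn u ^ (-(2)/(1+α))` to `M ^ (-(1)/(1+α))`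
    have hXM : Xn u ^ (-(2 : ℝ) / (1 + α)) = M ^ (-(1 : ℝ) / (1 + α)) := by
      rw [hMdef, ← Real.rpow_natCast (Xn u) 2, ← Real.rpow_mul (hXnonneg u)]
      congr 1
      push_cast
      ring
    have key : ∀ t : ℝ, 0 ≤ t → Var (P t u) ≤ (A + Bc * t) ^ (-(1 + α)) := by
      intro b hb
      have hw : ∀ x : ℝ, 0 ≤ x → 0 < A + Bc * x := fun x hx => by positivity
      have hBd : ∀ x : ℝ, 0 ≤ x →
          HasDerivAt (fun y : ℝ => (A + Bc * y) ^ (-(1 + α)))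
            (Bc * -(1 + α) * (A + Bc * x) ^ (-(1 + α) - 1)) x := by
        intro x hx
        have h1 : HasDerivAt (fun y : ℝ => A + Bc * y) Bc x := by
          simpa using ((hasDerivAt_id x).const_mul Bc).const_add A
        have := h1.rpow_const (p := -(1 + α)) (Or.inl (hw x hx).ne')
        convert this using 1
      have := image_le_of_deriv_right_lt_deriv_boundary'
        (f := fun s : ℝ => Var (P s u)) (f' := fun s : ℝ => -2 * ℰ (P s u))
        (a := 0) (b := b)
        (B := fun y : ℝ => (A + Bc * y) ^ (-(1 + α)))
        (B' := fun y : ℝ => Bc * -(1 + α) * (A + Bc * y) ^ (-(1 + α) - 1))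
        (fun s hs => ((hderiv u s hs.1).continuousWithinAt).mono Icc_subset_Ici_self)
        (fun x hx => (hderiv u x hx.1).mono (Ici_subset_Ici.2 hx.1))
        (by
          show Var (P 0 u) ≤ (A + Bc * 0) ^ (-(1 + α))
          rw [hP0]
          have : (A + Bc * 0) ^ (-(1 + α)) = Var u := by
            rw [mul_zero, add_zero, hAdef, ← Real.rpow_mul (hVarnonneg u)]
            rw [show -(1:ℝ) / (1 + α) * -(1 + α) = 1 by field_simp]
            exact Real.rpow_one _
          rw [this])
        (fun x hx => ((hBd x hx.1).continuousAt).continuousWithinAt)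
        (fun x hx => (hBd x hx.1).hasDerivWithinAt)
        ?_
      · exact this ⟨hb, le_rfl⟩
      · -- the contact-point bound
        intro x hx hcontact
        have hwx : 0 < A + Bc * x := hw x hx.1
        set v : ℝ := (A + Bc * x) ^ (-(1 + α)) with hvdef
        have hv : 0 < v := Real.rpow_pos_of_pos hwx _
        set e : ℝ := ℰ (P x u) with hedef
        have he : 0 ≤ e := hℰnonneg _
        -- weak Poincaré inequality at time x
        have h1 : v ≤ C * e ^ ((α + 1) / (α + 2)) * M ^ ((1:ℝ) / (α + 2)) := by
          have hW := hWPI (P x u)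
          have h2 : (Xn (P x u) ^ 2 : ℝ) ^ ((1:ℝ) / (α + 2)) ≤ M ^ ((1:ℝ) / (α + 2)) :=
            Real.rpow_le_rpow (by positivity) (hXdecay u x hx.1) (by positivity)
          calc v = Var (P x u) := hcontact.symm
            _ ≤ C * e ^ ((α + 1) / (α + 2)) * (Xn (P x u) ^ 2) ^ ((1:ℝ) / (α + 2)) := by
                simpa using hW
            _ ≤ C * e ^ ((α + 1) / (α + 2)) * M ^ ((1:ℝ) / (α + 2)) := by
                have : (0:ℝ) ≤ C * e ^ ((α + 1) / (α + 2)) := by positivity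
                exact mul_le_mul_of_nonneg_left h2 this
        -- lower bound for the energy
        have hMq : (0:ℝ) < M ^ ((1:ℝ) / (α + 2)) := Real.rpow_pos_of_pos hM _
        have h3 : v / (C * M ^ ((1:ℝ) / (α + 2))) ≤ e ^ ((α + 1) / (α + 2)) := by
          rw [div_le_iff₀ (by positivity)]
          nlinarith
        have h4 : (v / (C * M ^ ((1:ℝ) / (α + 2)))) ^ r ≤ e := by
          have := Real.rpow_le_rpow (by positivity) h3 hr_pos.le
          rwa [← Real.rpow_mul he,
            show (α + 1) / (α + 2) * r = 1 by rw [hr_def]; field_simp,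
            Real.rpow_one] at this
        have h5 : (v / (C * M ^ ((1:ℝ) / (α + 2)))) ^ r
            = v ^ r / (C ^ r * M ^ ((1:ℝ) / (α + 1))) := by
          rw [Real.div_rpow hv.le (by positivity),
            Real.mul_rpow hC.le hMq.le, ← Real.rpow_mul hM.le,
            show (1:ℝ) / (α + 2) * r = 1 / (α + 1) by rw [hr_def]; field_simp]
        -- identify `B'` with `-(v^r / (C^r * M^(1/(α+1))))`
        have h6 : (A + Bc * x) ^ (-(1 + α) - 1) = v ^ r := by
          rw [hvdef, ← Real.rpow_mul hwx.le,
            show -(1 + α) * r = -(1 + α) - 1 by rw [hr_def]; field_simp; ring]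
        have h7 : Bc * -(1 + α) * (A + Bc * x) ^ (-(1 + α) - 1)
            = -(v ^ r / (C ^ r * M ^ ((1:ℝ) / (α + 1)))) := by
          rw [h6, hBcdef, hXM, hC₃def]
          have hM1 : M ^ (-(1:ℝ) / (1 + α)) = (M ^ ((1:ℝ) / (α + 1)))⁻¹ := by
            rw [show -(1:ℝ) / (1 + α) = -((1:ℝ)/(α+1)) by ring_nf, Real.rpow_neg hM.le]
          rw [hM1]
          have hM2 : (0:ℝ) < M ^ ((1:ℝ) / (α + 1)) := Real.rpow_pos_of_pos hM _
          field_simp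
        show -2 * ℰ (P x u) < Bc * -(1 + α) * (A + Bc * x) ^ (-(1 + α) - 1)
        rw [h7]
        have hq : 0 < v ^ r / (C ^ r * M ^ ((1:ℝ) / (α + 1))) := by
          have : (0:ℝ) < v ^ r := Real.rpow_pos_of_pos hv _
          positivity
        rw [h5] at h4
        nlinarith
    constructor
    · intro t ht
      exact key t ht
    · refine ⟨1, one_pos, Bc ^ (-(1 + α)), Real.rpow_pos_of_pos hBc _, fun t ht => ?_⟩
      have ht0 : (0:ℝ) < t := by linarith
      calc Var (P t u) ≤ (A + Bc * t) ^ (-(1 + α)) := key t ht0.le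
        _ ≤ (Bc * t) ^ (-(1 + α)) := by
            apply Real.rpow_le_rpow_of_nonpos (by positivity) (by linarith) (by linarith)
        _ = Bc ^ (-(1 + α)) * t ^ (-(1 + α)) := Real.mul_rpow hBc.le ht0.le
end

section
/- Let \psi: (0,R) \to (0,\infty) be continuous with \Psi(\rho) = \int_0^\rho \psi finite, let g(\rho) = \Psi(\rho) + \rho\psi(\rho) be non-decreasing with limits 0 and +\infty at the endpoints. Suppose H is a self-adjoint non-negative operator on \mathcal{H} whose spectral measure satisfies ((E(\rho) - E(\{0\}))u, u) \le \Psi(\rho) \|u\|_\mathcal{X}\|u\|_\mathcal{Y} for all \rho \in (0,R) and u in a dense subset. Then for all u in the form domain with \|u\|_\mathcal{X}, \|u\|_\mathcal{Y} < \infty: (g^{-1}(Var(u)/(\|u\|_\mathcal{X}\|u\|_\mathcal{Y})))^2 \cdot \psi(g^{-1}(Var(u)/(\|u\|_\mathcal{X}\|u\|_\mathcal{Y}))) \cdot \|u\|_\mathcal{X}\|u\|_\mathcal{Y} \le \mathcal{E}(u). -/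
open MeasureTheory Set
open scoped ENNReal

/-- Proposition 5a of the paper: weak Poincaré inequality with
precise constant.  The spectral data of the self-adjoint non-negative operator `H`
is encoded, for each `u` in the dense set `D`, by the scalar spectral measure
`μ u = (E(·)u, u)` on `ℝ` supported on `[0,∞)`; `Var u = μ u (0,∞)`, `ℰ u = ∫ λ dμ_u`,
and `((E(ρ) - E({0}))u, u) = μ u (0,ρ) ≤ Ψ(ρ)‖u‖_X‖u‖_Y` for `ρ ∈ S = (0,R)`.
Here `ψ` is continuous and positive on `S`, `Ψ(ρ) = ∫_0^ρ ψ`,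
`g(ρ) = Ψ(ρ) + ρψ(ρ)` is non-decreasing with limits `0` and `+∞` at the endpoints
(encoded by the inverse `ginv` mapping `(0,∞)` onto `S`).  Conclusion:
`(g⁻¹(Var(u)/(‖u‖_X‖u‖_Y)))² ψ(g⁻¹(Var(u)/(‖u‖_X‖u‖_Y))) ‖u‖_X‖u‖_Y ≤ ℰ(u)`. -/
theorem stmt15 {H : Type*} [NormedAddCommGroup H] [InnerProductSpace ℝ H]
    (D : Set H) (μ : H → Measure ℝ) (Var ℰ Xn Yn : H → ℝ)
    (R : ℝ≥0∞) (hR : 0 < R)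
    (S : Set ℝ) (hSdef : S = {ρ : ℝ | 0 < ρ ∧ ENNReal.ofReal ρ < R})
    (ψ Ψ g ginv : ℝ → ℝ)
    (hψcont : ContinuousOn ψ S) (hψpos : ∀ ρ ∈ S, 0 < ψ ρ)
    (hψint : ∀ ρ ∈ S, IntegrableOn ψ (Ioo 0 ρ))
    (hΨ : ∀ ρ ∈ S, Ψ ρ = ∫ lam in Ioo 0 ρ, ψ lam)
    (hg : ∀ ρ ∈ S, g ρ = Ψ ρ + ρ * ψ ρ)
    (hmono : MonotoneOn g S)
    (hginv : ∀ y : ℝ, 0 < y → ginv y ∈ S ∧ g (ginv y) = y)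
    (hfin : ∀ u ∈ D, IsFiniteMeasure (μ u))
    (hsupp : ∀ u ∈ D, (μ u) (Iio (0 : ℝ)) = 0)
    (hVar : ∀ u ∈ D, Var u = ((μ u) (Ioi (0 : ℝ))).toReal)
    (hint : ∀ u ∈ D, Integrable (fun lam : ℝ => lam) (μ u))
    (hℰ : ∀ u ∈ D, ℰ u = ∫ lam, lam ∂(μ u))
    (hDoS : ∀ u ∈ D, ∀ ρ ∈ S, ((μ u) (Ioo 0 ρ)).toReal ≤ Ψ ρ * (Xn u * Yn u)) :
    ∀ u ∈ D, 0 < Xn u * Yn u → 0 < Var u →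
      ginv (Var u / (Xn u * Yn u)) ^ 2 * ψ (ginv (Var u / (Xn u * Yn u)))
          * (Xn u * Yn u) ≤ ℰ u := by
  intro u hu hc hV
  have hfinu := hfin u hu
  set c := Xn u * Yn u with hcdef
  set V := Var u with hVdef
  have hy : 0 < V / c := div_pos hV hc
  obtain ⟨hρS, hgρ⟩ := hginv (V / c) hy
  set ρ := ginv (V / c) with hρdef
  have hρpos : 0 < ρ := by
    have h := hρS; rw [hSdef] at h; exact h.1
  have hψρ : 0 < ψ ρ := hψpos ρ hρS
  have hintu := hint u hu
  -- a.e. nonnegativity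
  have h0le : 0 ≤ᵐ[μ u] fun x : ℝ => x := by
    rw [Filter.EventuallyLE, ae_iff]
    have hs : {x : ℝ | ¬ (0:ℝ) ≤ x} = Iio (0:ℝ) := by ext x; simp [not_le]
    convert hsupp u hu using 2; ext x; simp [not_le]
  -- measure splitting
  have hsplit : μ u (Ioi (0:ℝ)) = μ u (Ioo 0 ρ) + μ u (Ici ρ) := by
    rw [← Ioo_union_Ici_eq_Ioi hρpos]
    exact measure_union ((Iio_disjoint_Ici le_rfl).mono_left Ioo_subset_Iio_self)
      measurableSet_Ici
  have hIooR : (μ u (Ioo 0 ρ)).toReal ≤ Ψ ρ * c := hDoS u hu ρ hρS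
  have hIci : V - Ψ ρ * c ≤ (μ u (Ici ρ)).toReal := by
    have hV' : V = (μ u (Ioi 0)).toReal := hVar u hu
    rw [hV', hsplit, ENNReal.toReal_add (measure_ne_top _ _) (measure_ne_top _ _)]
    linarith
  -- integral lower bounds
  have h1 : ∫ x in Ici ρ, x ∂(μ u) ≤ ∫ x, x ∂(μ u) :=
    setIntegral_le_integral hintu h0le
  have h2 : ρ * (μ u (Ici ρ)).toReal ≤ ∫ x in Ici ρ, x ∂(μ u) := by
    have := setIntegral_mono_on (μ := μ u) (f := fun _ : ℝ => ρ)
      (g := fun x : ℝ => x) (s := Ici ρ)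
      (integrableOn_const (measure_ne_top _ _))
      hintu.integrableOn measurableSet_Ici (fun x hx => hx)
    simpa [setIntegral_const, mul_comm, measureReal_def] using this
  have hVeq : V = (Ψ ρ + ρ * ψ ρ) * c := by
    have hgr := hg ρ hρS
    field_simp at hgρ
    rw [← hgr, hgρ]
  have hμtR : (0:ℝ) ≤ (μ u (Ici ρ)).toReal := ENNReal.toReal_nonneg
  have h3 : ρ * (V - Ψ ρ * c) ≤ ρ * (μ u (Ici ρ)).toReal :=
    mul_le_mul_of_nonneg_left hIci hρpos.le
  have hE : ℰ u = ∫ x, x ∂(μ u) := hℰ u hu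
  have key : ρ * (V - Ψ ρ * c) ≤ ℰ u := by
    rw [hE]; linarith
  have : ρ ^ 2 * ψ ρ * c = ρ * (V - Ψ ρ * c) := by
    rw [hVeq]; ring
  linarith
end

section
/- Suppose a Markov semigroup P_t with generator -H on L^2(M,d\mu) satisfies the weak Poincaré inequality Var(u) \le C \mathcal{E}(u)^{(\alpha+1)/(\alpha+2)} \Phi(u)^{1/(\alpha+2)} with \Phi(u) = \|u\|_\mathcal{X}^2, and \|P_t u\|_\mathcal{X}^2 \le \|u\|_\mathcal{X}^2 + C_2 t^\beta with 0 < \beta < 1+\alpha and C_2 > 0. Then Var(P_t u) = O(t^{\beta - (1+\alpha)}) as t \to \infty. -/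
open Set

/-- Theorem 2 of the paper, the case `0 < β < 1 + α`.  The Markov
semigroup `P_t = e^{-tH}` on `L²(M,dμ)` satisfies the weak Poincaré inequality
`Var(u) ≤ C ℰ(u)^{(α+1)/(α+2)} (‖u‖_𝒳²)^{1/(α+2)}`, the `𝒳`-norm growth bound
`‖P_t u‖_𝒳² ≤ ‖u‖_𝒳² + C₂ t^β` with `0 < β < 1+α`, `C₂ > 0`, and the entropy
identity `d/dt Var(P_t u) = -2ℰ(P_t u)`.  Then `Var(P_t u) = O(t^{β-(1+α)})`
as `t → ∞`. -/
theorem stmt18 {ℋ : Type*} [NormedAddCommGroup ℋ] [InnerProductSpace ℝ ℋ]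
    (P : ℝ → ℋ → ℋ) (Var ℰ Xn : ℋ → ℝ) (α C C₂ β : ℝ)
    (hα : -1 < α) (hC : 0 < C) (hC₂ : 0 < C₂)
    (hβ : 0 < β) (hβα : β < 1 + α)
    (hVarnonneg : ∀ v, 0 ≤ Var v) (hℰnonneg : ∀ v, 0 ≤ ℰ v)
    (hXnonneg : ∀ v, 0 ≤ Xn v)
    (hP0 : ∀ v, P 0 v = v)
    (hWPI : ∀ v, Var v ≤ C * ℰ v ^ ((α + 1) / (α + 2)) * (Xn v ^ 2) ^ (1 / (α + 2)))
    (u : ℋ)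
    (hXgrowth : ∀ t : ℝ, 0 ≤ t → Xn (P t u) ^ 2 ≤ Xn u ^ 2 + C₂ * t ^ β)
    (hderiv : ∀ t : ℝ, 0 ≤ t →
      HasDerivWithinAt (fun s : ℝ => Var (P s u)) (-2 * ℰ (P t u)) (Ici 0) t) :
    ∃ T > (0 : ℝ), ∃ K > (0 : ℝ), ∀ t ≥ T, Var (P t u) ≤ K * t ^ (β - (1 + α)) := by
  have ha1 : (0 : ℝ) < α + 1 := by linarith
  have ha2 : (0 : ℝ) < α + 2 := by linarith
  set δ : ℝ := 1 + α - β with hδdef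
  have hδ : 0 < δ := by rw [hδdef]; linarith
  set p : ℝ := (α + 2) / (α + 1) with hpdef
  set q : ℝ := (α + 1) / (α + 2) with hqdef
  have hp : 0 < p := by rw [hpdef]; exact div_pos ha2 ha1
  have hq : 0 < q := by rw [hqdef]; exact div_pos ha1 ha2
  have hqp : q * p = 1 := by rw [hqdef, hpdef]; field_simp
  -- the time after which `C₂ t^β` dominates `Xn u ^ 2`
  set T₀ : ℝ := (Xn u ^ 2 / C₂) ^ (1 / β) with hT₀def
  have hT₀0 : 0 ≤ T₀ := by rw [hT₀def]; exact Real.rpow_nonneg (by positivity) _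
  set T : ℝ := max T₀ 1 with hTdef
  have hT1 : (1 : ℝ) ≤ T := by rw [hTdef]; exact le_max_right _ _
  have hT0 : 0 < T := lt_of_lt_of_le one_pos hT1
  have hTT₀ : T₀ ≤ T := by rw [hTdef]; exact le_max_left _ _
  -- for `t ≥ T`, `Xn u ^ 2 ≤ C₂ t ^ β`
  have hdom : ∀ t : ℝ, T ≤ t → Xn u ^ 2 ≤ C₂ * t ^ β := by
    intro t ht
    have htT₀ : T₀ ≤ t := le_trans hTT₀ ht
    have hT₀β : T₀ ^ β = Xn u ^ 2 / C₂ := by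
      rw [hT₀def, ← Real.rpow_mul (by positivity), one_div,
        inv_mul_cancel₀ (ne_of_gt hβ), Real.rpow_one]
    have h1 : T₀ ^ β ≤ t ^ β := Real.rpow_le_rpow hT₀0 htT₀ hβ.le
    rw [hT₀β, div_le_iff₀ hC₂] at h1
    linarith
  -- the constant
  set G : ℝ := C ^ p * (2 * C₂) ^ (1 / (α + 1)) with hGdef
  have hG : 0 < G := by rw [hGdef]; positivity
  set K : ℝ := max ((δ / 2 * G) ^ (α + 1)) (Var u * T ^ δ) + 1 with hKdef
  have hK0 : 0 < K := by
    have h : (0 : ℝ) ≤ max ((δ / 2 * G) ^ (α + 1)) (Var u * T ^ δ) :=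
      le_trans (Real.rpow_nonneg (by positivity) _) (le_max_left _ _)
    rw [hKdef]; linarith
  have hK1 : δ / 2 * G < K ^ (1 / (α + 1)) := by
    have h1 : (δ / 2 * G) ^ (α + 1) < K := by
      rw [hKdef]
      linarith [le_max_left ((δ / 2 * G) ^ (α + 1)) (Var u * T ^ δ)]
    have h2 := Real.rpow_lt_rpow (Real.rpow_nonneg (by positivity) _) h1
      (by positivity : (0:ℝ) < 1 / (α + 1))
    rwa [← Real.rpow_mul (by positivity), mul_one_div, div_self (ne_of_gt ha1),
      Real.rpow_one] at h2
  have hKT : Var u ≤ K * T ^ (-δ) := by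
    have h1 : Var u * T ^ δ ≤ K := by
      rw [hKdef]
      linarith [le_max_right ((δ / 2 * G) ^ (α + 1)) (Var u * T ^ δ)]
    have hTδ : 0 < T ^ δ := Real.rpow_pos_of_pos hT0 _
    rw [Real.rpow_neg hT0.le]
    calc Var u ≤ K / T ^ δ := (le_div_iff₀ hTδ).mpr h1
      _ = K * (T ^ δ)⁻¹ := div_eq_mul_inv _ _
  clear_value T₀ T G K δ p q
  -- continuity of `f`
  set f : ℝ → ℝ := fun s => Var (P s u) with hfdef
  have hcont : ContinuousOn f (Ici 0) := by
    intro t ht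
    rcases eq_or_lt_of_le (mem_Ici.mp ht : (0:ℝ) ≤ t) with h | h
    · subst h
      exact (hderiv 0 le_rfl).continuousWithinAt
    · exact (((hderiv t ht).hasDerivAt (Ici_mem_nhds h)).continuousAt).continuousWithinAt
  -- `f` is antitone on `Ici 0`
  have hanti : AntitoneOn f (Ici 0) := by
    apply antitoneOn_of_deriv_nonpos (convex_Ici 0) hcont
    · intro t ht
      rw [interior_Ici] at ht
      exact (((hderiv t (le_of_lt ht)).hasDerivAt
        (Ici_mem_nhds ht)).differentiableAt).differentiableWithinAt
    · intro t ht
      rw [interior_Ici] at ht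
      rw [((hderiv t (le_of_lt ht)).hasDerivAt (Ici_mem_nhds ht)).deriv]
      have := hℰnonneg (P t u)
      linarith
  -- the key derivative bound at contact points
  have key : ∀ x : ℝ, T ≤ x → f x = K * x ^ (-δ) →
      -2 * ℰ (P x u) < K * (-δ * x ^ (-δ - 1)) := by
    intro x hx hfx
    have hx0 : 0 < x := lt_of_lt_of_le hT0 hx
    set v : ℋ := P x u with hvdef
    set E : ℝ := ℰ v with hEdef
    have hE0 : 0 ≤ E := hℰnonneg v
    have hVarpos : 0 < Var v := by
      rw [show Var v = f x from rfl, hfx]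
      positivity
    have hXb : Xn v ^ 2 ≤ 2 * (C₂ * x ^ β) := by
      have h1 := hXgrowth x hx0.le
      have h2 := hdom x hx
      rw [hvdef]; linarith
    have hWPIv := hWPI v

    have hEpos : 0 < E := by
      rcases lt_or_eq_of_le hE0 with h | h
      · exact h
      · exfalso
        rw [← hEdef, ← h, Real.zero_rpow (ne_of_gt hq)] at hWPIv
        simp only [mul_zero, zero_mul] at hWPIv
        linarith
    -- step 1 : Var v ≤ (C * (2C₂)^(1/(α+2))) * x^(β/(α+2)) * E^q
    have hXpow : (Xn v ^ 2) ^ (1 / (α + 2)) ≤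
        (2 * C₂) ^ (1 / (α + 2)) * x ^ (β / (α + 2)) := by
      have h1 : (Xn v ^ 2) ^ (1 / (α + 2)) ≤ (2 * (C₂ * x ^ β)) ^ (1 / (α + 2)) :=
        Real.rpow_le_rpow (by positivity) hXb (by positivity)
      have h2 : (2 * (C₂ * x ^ β)) ^ (1 / (α + 2)) =
          (2 * C₂) ^ (1 / (α + 2)) * x ^ (β / (α + 2)) := by
        rw [← mul_assoc, Real.mul_rpow (by positivity) (Real.rpow_nonneg hx0.le _),
          ← Real.rpow_mul hx0.le, mul_one_div]
      rw [h2] at h1; exact h1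
    have hstep1 : K * x ^ (-δ) ≤
        (C * (2 * C₂) ^ (1 / (α + 2)) * x ^ (β / (α + 2))) * E ^ q := by
      calc K * x ^ (-δ) = Var v := hfx.symm
        _ ≤ C * E ^ q * (Xn v ^ 2) ^ (1 / (α + 2)) := hWPIv
        _ ≤ C * E ^ q * ((2 * C₂) ^ (1 / (α + 2)) * x ^ (β / (α + 2))) := by
            apply mul_le_mul_of_nonneg_left hXpow (by positivity)
        _ = (C * (2 * C₂) ^ (1 / (α + 2)) * x ^ (β / (α + 2))) * E ^ q := by ring
    -- step 2 : raise to power p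
    have hstep2 : (K * x ^ (-δ)) ^ p ≤
        ((C * (2 * C₂) ^ (1 / (α + 2)) * x ^ (β / (α + 2))) * E ^ q) ^ p :=
      Real.rpow_le_rpow (by positivity) hstep1 hp.le
    -- simplify both sides
    have hLHS : (K * x ^ (-δ)) ^ p = K ^ p * x ^ (-δ * p) := by
      rw [Real.mul_rpow hK0.le (Real.rpow_nonneg hx0.le _), ← Real.rpow_mul hx0.le]
    have hRHS : ((C * (2 * C₂) ^ (1 / (α + 2)) * x ^ (β / (α + 2))) * E ^ q) ^ p =
        G * x ^ (β / (α + 1)) * E := by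
      rw [Real.mul_rpow (by positivity) (Real.rpow_nonneg hE0 _),
        Real.mul_rpow (by positivity) (Real.rpow_nonneg hx0.le _),
        Real.mul_rpow hC.le (Real.rpow_nonneg (by positivity) _),
        ← Real.rpow_mul (by positivity : (0:ℝ) ≤ 2 * C₂),
        ← Real.rpow_mul hx0.le, ← Real.rpow_mul hE0, hqp, Real.rpow_one, hGdef]
      have e1 : 1 / (α + 2) * p = 1 / (α + 1) := by
        rw [hpdef]; field_simp
      have e2 : β / (α + 2) * p = β / (α + 1) := by
        rw [hpdef]; field_simp
      rw [e1, e2]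
    rw [hLHS, hRHS] at hstep2
    -- exponent identity : x^(-δ-1) * x^(β/(α+1)) = x^(-δ*p)
    have hexp : x ^ (-δ - 1) * x ^ (β / (α + 1)) = x ^ (-δ * p) := by
      rw [← Real.rpow_add hx0]
      congr 1
      rw [hδdef, hpdef]; field_simp; ring
    -- K^p = K * K^(1/(α+1))
    have hKp : K ^ p = K * K ^ (1 / (α + 1)) := by
      have hpe : p = 1 + 1 / (α + 1) := by rw [hpdef]; field_simp; ring
      rw [hpe, Real.rpow_add hK0, Real.rpow_one]
    -- put it together
    have he2 : 0 < x ^ (β / (α + 1)) := Real.rpow_pos_of_pos hx0 _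
    have he3 : 0 < x ^ (-δ - 1) := Real.rpow_pos_of_pos hx0 _
    have hchain : K * (δ / 2 * G) * (x ^ (-δ - 1) * x ^ (β / (α + 1))) <
        G * x ^ (β / (α + 1)) * E := by
      calc K * (δ / 2 * G) * (x ^ (-δ - 1) * x ^ (β / (α + 1)))
          < K * K ^ (1 / (α + 1)) * (x ^ (-δ - 1) * x ^ (β / (α + 1))) := by
            apply mul_lt_mul_of_pos_right _ (by positivity)
            exact mul_lt_mul_of_pos_left hK1 hK0
        _ = K ^ p * x ^ (-δ * p) := by rw [hKp, hexp]
        _ ≤ G * x ^ (β / (α + 1)) * E := hstep2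
    -- divide by G * x^(β/(α+1))
    have hfin : δ * K * x ^ (-δ - 1) < 2 * E := by
      have h2 := mul_lt_mul_of_pos_left hchain two_pos
      have h1 : (δ * K * x ^ (-δ - 1)) * (G * x ^ (β / (α + 1))) <
          (2 * E) * (G * x ^ (β / (α + 1))) := by
        calc (δ * K * x ^ (-δ - 1)) * (G * x ^ (β / (α + 1)))
            = 2 * (K * (δ / 2 * G) * (x ^ (-δ - 1) * x ^ (β / (α + 1)))) := by ring
          _ < 2 * (G * x ^ (β / (α + 1)) * E) := h2
          _ = (2 * E) * (G * x ^ (β / (α + 1))) := by ring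
      exact lt_of_mul_lt_mul_right h1 (by positivity)
    have hre : K * (-δ * x ^ (-δ - 1)) = -(δ * K * x ^ (-δ - 1)) := by ring
    rw [hre]
    linarith
  -- conclusion via the fencing theorem
  refine ⟨T, hT0, K, hK0, fun t ht => ?_⟩
  have ht0 : 0 < t := lt_of_lt_of_le hT0 ht
  have hβδ : β - (1 + α) = -δ := by rw [hδdef]; ring
  rw [hβδ]
  have hfa : f T ≤ K * T ^ (-δ) := by
    have h0 : f 0 = Var u := by rw [hfdef]; simp only [hP0]
    have h1 := hanti (self_mem_Ici) (mem_Ici.mpr hT0.le) hT0.le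
    rw [h0] at h1
    exact le_trans h1 hKT
  have hfinal := image_le_of_deriv_right_lt_deriv_boundary'
    (f := f) (f' := fun s => -2 * ℰ (P s u)) (a := T) (b := t)
    (B := fun s => K * s ^ (-δ)) (B' := fun s => K * (-δ * s ^ (-δ - 1)))
    (hcont.mono (fun s hs => le_trans hT0.le hs.1))
    (fun s hs => (hderiv s (le_trans hT0.le hs.1)).mono
      (Ici_subset_Ici.2 (le_trans hT0.le hs.1)))
    hfa
    (ContinuousOn.mul continuousOn_const
      (fun s hs => (Real.continuousAt_rpow_const s (-δ)
        (Or.inl (ne_of_gt (lt_of_lt_of_le hT0 hs.1)))).continuousWithinAt))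
    (fun s hs => ((Real.hasDerivAt_rpow_const
      (Or.inl (ne_of_gt (lt_of_lt_of_le hT0 hs.1)))).const_mul K).hasDerivWithinAt)
    (fun s hs hfs => key s hs.1 hfs)
  exact hfinal ⟨ht, le_refl t⟩
end
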